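/- Let 𝓛 be a finite collection of dyadic cubes in ℝ^d and suppose there is a constant B ≥ 1 such that for every dyadic cube R, Σ_{Q ∈ 𝓛, Q ⊆ R} |Q| ≤ B |R|. Then (a John–Nirenberg-type conclusion) for every dyadic cube R and every integer k ≥ 1, |{x ∈ R : Σ_{Q ∈ 𝓛, Q ⊆ R} 1_Q(x) ≥ 2Bk}| ≤ 2^{-k} |R|. -/

import Mathlib

/-!
Only the nesting of dyadic cubes matters. Write `N_R` for the overlap function of the cubes of
`𝓛` inside `R`. By Chebyshev and the packing condition, `t |{N_R ≥ t}| ≤ B |R|`. Call a cube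
`S ⊆ R` of `𝓛` heavy if at least `t` cubes of `𝓛` lie between `S` and `R`, and let the stopping
cubes be the maximal heavy ones: they are disjoint and contained in `{N_R ≥ t}`, so
`t Σ |S| ≤ B |R|`, and on each of them `N_R < t + N_S`. Hence `{N_R ≥ t (k + 1)}` is covered by
the sets `{x ∈ S : N_S(x) ≥ t k}`, and induction on `k` gives `t^k |{N_R ≥ t k}| ≤ B^k |R|`;
take `t = 2B`.
-/

open MeasureTheory Set
open scoped ENNReal Classical

/-- A dyadic cube in `ℝ^d`, given by a scale `k` and lower-corner integer coordinates `m`. -/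
structure DyadicCube (d : ℕ) where
  k : ℤ
  m : Fin d → ℤ

/-- The subset of `ℝ^d` corresponding to a dyadic cube. -/
def DyadicCube.toSet {d : ℕ} (Q : DyadicCube d) : Set (Fin d → ℝ) :=
  Set.univ.pi fun i => Set.Ico ((Q.m i : ℝ) * 2 ^ Q.k) (((Q.m i : ℝ) + 1) * 2 ^ Q.k)

theorem mem_Ico_zpow_iff_floor_eq {x : ℝ} {m k : ℤ} :
    x ∈ Ico ((m : ℝ) * 2 ^ k) (((m : ℝ) + 1) * 2 ^ k) ↔ ⌊x / 2 ^ k⌋ = m := by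
  have h : (0 : ℝ) < 2 ^ k := zpow_pos two_pos k
  rw [Int.floor_eq_iff, le_div_iff₀ h, div_lt_iff₀ h, mem_Ico]

theorem floor_div_two_zpow_of_le (x : ℝ) {j k : ℤ} (hjk : j ≤ k) :
    ⌊x / 2 ^ k⌋ = ⌊x / 2 ^ j⌋ / (2 ^ (k - j).toNat : ℕ) := by
  have hk : (2 : ℝ) ^ k = 2 ^ j * ((2 ^ (k - j).toNat : ℕ) : ℝ) := by
    rw [Nat.cast_pow, Nat.cast_ofNat, ← zpow_natCast, ← zpow_add₀ two_ne_zero]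
    congr 1
    omega
  rw [hk, ← div_div, Int.floor_div_natCast]

namespace DyadicCube

variable {d : ℕ}

theorem mem_toSet_iff {Q : DyadicCube d} {x : Fin d → ℝ} :
    x ∈ Q.toSet ↔ ∀ i, ⌊x i / 2 ^ Q.k⌋ = Q.m i := by
  simp only [toSet, mem_univ_pi, mem_Ico_zpow_iff_floor_eq]

theorem measurableSet_toSet (Q : DyadicCube d) : MeasurableSet Q.toSet :=
  .univ_pi fun _ => measurableSet_Ico

-- The index of the coarser cube containing a point is a function of the index of the finer one.
theorem toSet_subset_of_le {Q R : DyadicCube d} (hk : Q.k ≤ R.k) {x : Fin d → ℝ}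
    (hxQ : x ∈ Q.toSet) (hxR : x ∈ R.toSet) : Q.toSet ⊆ R.toSet := by
  intro y hyQ
  rw [mem_toSet_iff] at hxQ hxR hyQ ⊢
  intro i
  rw [← hxR i, floor_div_two_zpow_of_le _ hk, floor_div_two_zpow_of_le _ hk, hyQ i, hxQ i]

end DyadicCube

def IsLaminar {α ι : Type*} (Q : ι → Set α) : Prop :=
  ∀ i j, (Q i ∩ Q j).Nonempty → Q i ⊆ Q j ∨ Q j ⊆ Q i

theorem DyadicCube.isLaminar_toSet {d : ℕ} : IsLaminar (DyadicCube.toSet (d := d)) := by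
  rintro Q R ⟨x, hxQ, hxR⟩
  rcases le_total Q.k R.k with h | h
  · exact .inl (toSet_subset_of_le h hxQ hxR)
  · exact .inr (toSet_subset_of_le h hxR hxQ)

section Laminar

open Finset

variable {α ι : Type*} {Q : ι → Set α} {L : Finset ι} {r s : Set α} {x : α} {t : ℝ}

theorem IsLaminar.exists_forall_subset (hQ : IsLaminar Q) {A : Finset ι} (hA : A.Nonempty)
    (hx : ∀ i ∈ A, x ∈ Q i) : ∃ i₀ ∈ A, ∀ i ∈ A, Q i₀ ⊆ Q i := by
  obtain ⟨i₀, hi₀A, hi₀min⟩ := A.exists_minimalFor Q hA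
  refine ⟨i₀, hi₀A, fun i hi => ?_⟩
  rcases hQ i i₀ ⟨x, hx i hi, hx i₀ hi₀A⟩ with h | h
  exacts [hi₀min hi h, h]

noncomputable def overlapCount (L : Finset ι) (Q : ι → Set α) (r : Set α) (x : α) : ℕ :=
  #{i ∈ L | Q i ⊆ r ∧ x ∈ Q i}

noncomputable def ancestorCount (L : Finset ι) (Q : ι → Set α) (r s : Set α) : ℕ :=
  #{i ∈ L | s ⊆ Q i ∧ Q i ⊆ r}

noncomputable def heavySets (L : Finset ι) (Q : ι → Set α) (r : Set α) (t : ℝ) :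
    Finset (Set α) :=
  {i ∈ L | Q i ⊆ r ∧ t ≤ ancestorCount L Q r (Q i)}.image Q

noncomputable def stoppingSets (L : Finset ι) (Q : ι → Set α) (r : Set α) (t : ℝ) :
    Finset (Set α) :=
  {s ∈ heavySets L Q r t | Maximal (· ∈ heavySets L Q r t) s}

theorem sum_indicator_eq_overlapCount {M : Type*} [AddCommMonoidWithOne M] :
    (∑ i ∈ L, if Q i ⊆ r then (Q i).indicator (fun _ => (1 : M)) x else 0)
      = overlapCount L Q r x := by
  simp only [overlapCount, Finset.card_filter, indicator_apply, ← ite_and, Nat.cast_sum,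
    Nat.cast_ite, Nat.cast_one, Nat.cast_zero]

theorem ancestorCount_le_overlapCount (hx : x ∈ s) :
    ancestorCount L Q r s ≤ overlapCount L Q r x :=
  card_le_card <| monotone_filter_right _ fun _ _ h => ⟨h.2, h.1 hx⟩

theorem mem_stoppingSets_iff :
    s ∈ stoppingSets L Q r t ↔ Maximal (· ∈ heavySets L Q r t) s := by
  simp only [stoppingSets, mem_filter, and_iff_right_iff_imp]
  exact Maximal.prop

theorem card_le_ancestorCount {A : Finset ι} (hA : ∀ i ∈ A, i ∈ L ∧ s ⊆ Q i ∧ Q i ⊆ r) :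
    #A ≤ ancestorCount L Q r s :=
  card_le_card fun i hi => Finset.mem_filter.mpr (hA i hi)

theorem mem_heavySets {i : ι} (hiL : i ∈ L) (hir : Q i ⊆ r)
    (ht : t ≤ ancestorCount L Q r (Q i)) : Q i ∈ heavySets L Q r t :=
  Finset.mem_image_of_mem Q (Finset.mem_filter.mpr ⟨hiL, hir, ht⟩)

theorem exists_of_mem_heavySets (hs : s ∈ heavySets L Q r t) :
    ∃ j ∈ L, Q j = s ∧ s ⊆ r ∧ t ≤ ancestorCount L Q r s := by
  simp only [heavySets, Finset.mem_image, Finset.mem_filter] at hs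
  obtain ⟨j, ⟨hjL, hjr, hjt⟩, rfl⟩ := hs
  exact ⟨j, hjL, rfl, hjr, hjt⟩

-- The smallest member of the chain `A` has all of `A` above it.
theorem IsLaminar.exists_mem_heavySets_of_le_card (hQ : IsLaminar Q) (ht : 0 < t)
    {A : Finset ι} (hA : ∀ i ∈ A, i ∈ L ∧ Q i ⊆ r ∧ x ∈ Q i) (htA : t ≤ #A) :
    ∃ i ∈ A, Q i ∈ heavySets L Q r t := by
  have hAne : A.Nonempty := card_pos.mp (by exact_mod_cast ht.trans_le htA)
  obtain ⟨i₀, hi₀A, hi₀min⟩ := hQ.exists_forall_subset hAne fun i hi => (hA i hi).2.2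
  obtain ⟨hi₀L, hi₀r, -⟩ := hA i₀ hi₀A
  refine ⟨i₀, hi₀A, mem_heavySets hi₀L hi₀r (htA.trans ?_)⟩
  exact_mod_cast card_le_ancestorCount fun i hi => ⟨(hA i hi).1, hi₀min i hi, (hA i hi).2.1⟩

theorem IsLaminar.pairwiseDisjoint_stoppingSets (hQ : IsLaminar Q) :
    (stoppingSets L Q r t : Set (Set α)).PairwiseDisjoint id := by
  intro s hs s' hs' hne
  rw [mem_coe, mem_stoppingSets_iff] at hs hs'
  obtain ⟨j, -, rfl, -⟩ := exists_of_mem_heavySets hs.prop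
  obtain ⟨j', -, rfl, -⟩ := exists_of_mem_heavySets hs'.prop
  rw [Function.onFun, id, id, Set.disjoint_iff_inter_eq_empty, ← Set.not_nonempty_iff_eq_empty]
  intro hjj'
  rcases hQ j j' hjj' with h | h
  exacts [hne (hs.eq_of_le hs'.prop h), hne (hs'.eq_of_le hs.prop h).symm]

theorem IsLaminar.exists_mem_stoppingSets (hQ : IsLaminar Q) (ht : 0 < t)
    (hx : t ≤ overlapCount L Q r x) : ∃ s ∈ stoppingSets L Q r t, x ∈ s := by
  obtain ⟨i₀, hi₀A, hheavy⟩ :=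
    hQ.exists_mem_heavySets_of_le_card ht (fun i hi => mem_filter.mp hi) hx
  obtain ⟨s, hi₀s, hs⟩ := (heavySets L Q r t).exists_le_maximal hheavy
  exact ⟨s, mem_stoppingSets_iff.mpr hs, hi₀s (mem_filter.mp hi₀A).2.2⟩

-- The members strictly between `s` and `r` form a chain through `x`; by the maximality of `s`
-- they are fewer than `t`.
theorem IsLaminar.overlapCount_lt_add_of_mem_stoppingSets (hQ : IsLaminar Q) (ht : 0 < t)
    (hs : s ∈ stoppingSets L Q r t) (hx : x ∈ s) :
    (overlapCount L Q r x : ℝ) < t + overlapCount L Q s x := by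
  rw [mem_stoppingSets_iff] at hs
  obtain ⟨j, -, rfl, hjr, -⟩ := exists_of_mem_heavySets hs.prop
  set A := {i ∈ L | Q j ⊂ Q i ∧ Q i ⊆ r}
  have hsplit : overlapCount L Q r x ≤ overlapCount L Q (Q j) x + #A := by
    refine (card_le_card fun i hi => ?_).trans (card_union_le _ _)
    obtain ⟨hiL, hir, hxi⟩ := mem_filter.mp hi
    rcases hQ i j ⟨x, hxi, hx⟩ with h | h
    · exact mem_union_left _ (mem_filter.mpr ⟨hiL, h, hxi⟩)
    · by_cases h' : Q i ⊆ Q j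
      · exact mem_union_left _ (mem_filter.mpr ⟨hiL, h', hxi⟩)
      · exact mem_union_right _ (mem_filter.mpr ⟨hiL, ⟨h, h'⟩, hir⟩)
  have hA : (#A : ℝ) < t := by
    by_contra! htA
    obtain ⟨i₀, hi₀A, hheavy⟩ := hQ.exists_mem_heavySets_of_le_card ht (fun i hi => by
      obtain ⟨hiL, hji, hir⟩ := mem_filter.mp hi
      exact ⟨hiL, hir, hji.le hx⟩) htA
    have hji₀ := (mem_filter.mp hi₀A).2.1
    exact hji₀.ne (hs.eq_of_le hheavy hji₀.le)
  have : (overlapCount L Q r x : ℝ) ≤ overlapCount L Q (Q j) x + #A := by exact_mod_cast hsplit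
  linarith

theorem IsLaminar.setOf_le_overlapCount_subset_biUnion (hQ : IsLaminar Q) (ht : 0 < t) (k : ℕ) :
    {x ∈ r | t * (k + 1 : ℕ) ≤ overlapCount L Q r x}
      ⊆ ⋃ s ∈ stoppingSets L Q r t, {x ∈ s | t * k ≤ overlapCount L Q s x} := by
  rintro x ⟨-, hx⟩
  push_cast at hx
  obtain ⟨s, hs, hxs⟩ := hQ.exists_mem_stoppingSets ht (by nlinarith [k.cast_nonneg (α := ℝ)])
  have := hQ.overlapCount_lt_add_of_mem_stoppingSets ht hs hxs
  exact mem_iUnion₂.mpr ⟨s, hs, hxs, by linarith⟩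

variable [MeasurableSpace α] {μ : Measure α}

theorem lintegral_overlapCount (hmeas : ∀ i, MeasurableSet (Q i)) :
    ∫⁻ x, (overlapCount L Q r x : ℝ≥0∞) ∂μ = ∑ i ∈ L, if Q i ⊆ r then μ (Q i) else 0 := by
  simp_rw [← sum_indicator_eq_overlapCount, ← Finset.sum_filter]
  rw [lintegral_finsetSum _ fun i _ => measurable_const.indicator (hmeas i)]
  simp_rw [lintegral_indicator_const (hmeas _), one_mul]

theorem ofReal_mul_measure_le_overlapCount_le (hmeas : ∀ i, MeasurableSet (Q i)) :
    ENNReal.ofReal t * μ {x ∈ r | t ≤ overlapCount L Q r x}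
      ≤ ∑ i ∈ L, if Q i ⊆ r then μ (Q i) else 0 := by
  calc _ ≤ ENNReal.ofReal t * μ {x | ENNReal.ofReal t ≤ overlapCount L Q r x} :=
        mul_le_mul_right (measure_mono fun x hx => ENNReal.ofReal_le_natCast.mpr hx.2) _
    _ ≤ ∫⁻ x, (overlapCount L Q r x : ℝ≥0∞) ∂μ := mul_meas_ge_le_lintegral₀ ?_ _
    _ = _ := lintegral_overlapCount hmeas
  simp_rw [← sum_indicator_eq_overlapCount, ← Finset.sum_filter]
  exact (Finset.measurable_sum _ fun i _ => measurable_const.indicator (hmeas i)).aemeasurable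

theorem IsLaminar.ofReal_mul_sum_measure_stoppingSets_le (hQ : IsLaminar Q)
    (hmeas : ∀ i, MeasurableSet (Q i)) :
    ENNReal.ofReal t * ∑ s ∈ stoppingSets L Q r t, μ s
      ≤ ∑ i ∈ L, if Q i ⊆ r then μ (Q i) else 0 := by
  have hstop : ∀ s ∈ stoppingSets L Q r t, ∃ j ∈ L, Q j = s ∧ s ⊆ r ∧ t ≤ ancestorCount L Q r s :=
    fun s hs => exists_of_mem_heavySets (mem_stoppingSets_iff.mp hs).prop
  have hunion : μ (⋃ s ∈ stoppingSets L Q r t, s) = ∑ s ∈ stoppingSets L Q r t, μ s :=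
    measure_biUnion_finset hQ.pairwiseDisjoint_stoppingSets fun s hs => by
      obtain ⟨j, -, rfl, -⟩ := hstop s hs
      exact hmeas j
  rw [← hunion]
  refine (mul_le_mul_right (measure_mono ?_) _).trans
    (ofReal_mul_measure_le_overlapCount_le hmeas)
  intro x hx
  obtain ⟨s, hs, hxs⟩ := mem_iUnion₂.mp hx
  obtain ⟨j, -, rfl, hjr, hjt⟩ := hstop s hs
  exact ⟨hjr hxs, hjt.trans (by exact_mod_cast ancestorCount_le_overlapCount hxs)⟩

theorem IsLaminar.ofReal_pow_mul_measure_le (hQ : IsLaminar Q) (hmeas : ∀ i, MeasurableSet (Q i))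
    {C : ℝ≥0∞} (hpack : ∀ j, (∑ i ∈ L, if Q i ⊆ Q j then μ (Q i) else 0) ≤ C * μ (Q j))
    (ht : 0 < t) (k : ℕ) (j : ι) :
    ENNReal.ofReal t ^ k * μ {x ∈ Q j | t * k ≤ overlapCount L Q (Q j) x} ≤ C ^ k * μ (Q j) := by
  induction k generalizing j with
  | zero => simp
  | succ k ih =>
    set S := stoppingSets L Q (Q j) t
    calc ENNReal.ofReal t ^ (k + 1) * μ {x ∈ Q j | t * (k + 1 : ℕ) ≤ overlapCount L Q (Q j) x}
        ≤ ENNReal.ofReal t ^ (k + 1) * ∑ s ∈ S, μ {x ∈ s | t * k ≤ overlapCount L Q s x} := by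
          gcongr
          exact (measure_mono (hQ.setOf_le_overlapCount_subset_biUnion ht k)).trans
            (measure_biUnion_finset_le _ _)
      _ = ENNReal.ofReal t *
            ∑ s ∈ S, ENNReal.ofReal t ^ k * μ {x ∈ s | t * k ≤ overlapCount L Q s x} := by
          rw [pow_succ', mul_assoc, mul_sum]
      _ ≤ ENNReal.ofReal t * ∑ s ∈ S, C ^ k * μ s := by
          refine mul_le_mul_right (sum_le_sum fun s hs => ?_) _
          obtain ⟨j', -, rfl, -⟩ := exists_of_mem_heavySets (mem_stoppingSets_iff.mp hs).prop
          exact ih j'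
      _ = C ^ k * (ENNReal.ofReal t * ∑ s ∈ S, μ s) := by rw [← mul_sum]; ring
      _ ≤ C ^ k * (C * μ (Q j)) :=
          mul_le_mul_right ((hQ.ofReal_mul_sum_measure_stoppingSets_le hmeas).trans (hpack j)) _
      _ = C ^ (k + 1) * μ (Q j) := by ring

end Laminar

/-- Carleson packing with constant `B` implies exponential decay of the level sets of the
overlap function: `|{x ∈ R : Σ_{Q ∈ 𝓛, Q ⊆ R} 1_Q(x) ≥ 2Bk}| ≤ 2^{-k}|R|`. -/
theorem stmt9 {d : ℕ} (L : Finset (DyadicCube d)) (B : ℝ) (hB : 1 ≤ B)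
    (hpack : ∀ R : DyadicCube d,
      (∑ Q ∈ L, if Q.toSet ⊆ R.toSet then volume Q.toSet else 0)
        ≤ ENNReal.ofReal B * volume R.toSet) :
    ∀ (R : DyadicCube d) (k : ℕ), 1 ≤ k →
      volume {x ∈ R.toSet |
          2 * B * (k : ℝ) ≤
            ∑ Q ∈ L, if Q.toSet ⊆ R.toSet
              then Q.toSet.indicator (fun _ => (1 : ℝ)) x else 0}
        ≤ (2 : ℝ≥0∞)⁻¹ ^ k * volume R.toSet := by
  intro R k _
  have hB₀ : ENNReal.ofReal B ≠ 0 := ENNReal.ofReal_ne_zero_iff.mpr (by linarith)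
  have key := DyadicCube.isLaminar_toSet.ofReal_pow_mul_measure_le DyadicCube.measurableSet_toSet
    hpack (t := 2 * B) (by linarith) k R
  simp_rw [sum_indicator_eq_overlapCount]
  rw [ENNReal.ofReal_mul zero_le_two, ENNReal.ofReal_ofNat, mul_pow, mul_comm (2 ^ k),
    mul_assoc] at key
  rw [← ENNReal.inv_pow, ← ENNReal.div_eq_inv_mul, ENNReal.le_div_iff_mul_le (by simp) (by simp),
    mul_comm]
  exact (ENNReal.mul_le_mul_iff_right (pow_ne_zero k hB₀) (by simp)).mp key
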